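/- arXiv:2112.07152 — 5 statements merged into one kernel-verified Lean document; each statement's English description precedes it below -/
import Mathlib

section
/- Let J be an invertible n×n complex matrix and D = J^{-H}J. If Z commutes with D, then X = Z − J⁻¹ Zᴴ J satisfies Xᴴ J + J X = 0, and Y = Z + J⁻¹ Zᴴ J satisfies Yᴴ J − J Y = 0. -/
open Matrix

/-- If `Z` commutes with the H-cosquare `D = J⁻ᴴ J` of an invertible complex matrix `J`,
then `X = Z − J⁻¹ Zᴴ J` satisfies `Xᴴ J + J X = 0` and
`Y = Z + J⁻¹ Zᴴ J` satisfies `Yᴴ J − J Y = 0`. -/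
theorem Hsol_and_Hcosol_from_centralizer (n : ℕ)
    (J Z : Matrix (Fin n) (Fin n) ℂ) (hJ : IsUnit J)
    (hZ : Z * ((Jᴴ)⁻¹ * J) = ((Jᴴ)⁻¹ * J) * Z) :
    (Z - J⁻¹ * Zᴴ * J)ᴴ * J + J * (Z - J⁻¹ * Zᴴ * J) = 0 ∧
    (Z + J⁻¹ * Zᴴ * J)ᴴ * J - J * (Z + J⁻¹ * Zᴴ * J) = 0 := by
  have hd : IsUnit J.det := (Matrix.isUnit_iff_isUnit_det J).mp hJ
  have hdH : IsUnit Jᴴ.det := by simpa [Matrix.det_conjTranspose] using hd.star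
  have h1 : J * J⁻¹ = 1 := Matrix.mul_nonsing_inv J hd
  have h3 : Jᴴ * (Jᴴ)⁻¹ = 1 := Matrix.mul_nonsing_inv Jᴴ hdH
  have key : Jᴴ * Z * (Jᴴ)⁻¹ * J = J * Z := by
    calc Jᴴ * Z * (Jᴴ)⁻¹ * J = Jᴴ * (Z * ((Jᴴ)⁻¹ * J)) := by noncomm_ring
    _ = Jᴴ * ((Jᴴ)⁻¹ * J * Z) := by rw [hZ]
    _ = (Jᴴ * (Jᴴ)⁻¹) * (J * Z) := by noncomm_ring
    _ = J * Z := by rw [h3, one_mul]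
  have hA : (J⁻¹ * Zᴴ * J)ᴴ * J = J * Z := by
    calc (J⁻¹ * Zᴴ * J)ᴴ * J = Jᴴ * Z * (J⁻¹)ᴴ * J := by
          simp [Matrix.conjTranspose_mul, Matrix.mul_assoc]
    _ = Jᴴ * Z * (Jᴴ)⁻¹ * J := by rw [Matrix.conjTranspose_nonsing_inv]
    _ = J * Z := key
  have hB : J * (J⁻¹ * Zᴴ * J) = Zᴴ * J := by
    calc J * (J⁻¹ * Zᴴ * J) = (J * J⁻¹) * (Zᴴ * J) := by noncomm_ring
    _ = Zᴴ * J := by rw [h1, one_mul]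
  constructor
  · rw [Matrix.conjTranspose_sub, Matrix.sub_mul, Matrix.mul_sub, hA, hB]
    abel
  · rw [Matrix.conjTranspose_add, Matrix.add_mul, Matrix.mul_add, hA, hB]
    abel
end

section
/- For an invertible n×n matrix J over a field of characteristic not 2, the vector space {Z : Z(J^{-T}J) = (J^{-T}J)Z} (the centralizer of the cosquare) is the internal direct sum of sol(J) = {X : Xᵀ J + J X = 0} and cosol(J) = {X : Xᵀ J − J X = 0}. -/
open Matrix

/-- For invertible `J` over a field of characteristic ≠ 2, the centralizer of the
cosquare `C = J⁻ᵀ J` is the internal direct sum of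
`sol(J) = {X : Xᵀ J + J X = 0}` and `cosol(J) = {X : Xᵀ J − J X = 0}`. -/
theorem centralizer_eq_sol_direct_sum_cosol {K : Type*} [Field K]
    (h2 : (2 : K) ≠ 0) (n : ℕ) (J : Matrix (Fin n) (Fin n) K) (hJ : IsUnit J) :
    (∀ X : Matrix (Fin n) (Fin n) K,
        Xᵀ * J + J * X = 0 → Xᵀ * J - J * X = 0 → X = 0) ∧
    (∀ Z : Matrix (Fin n) (Fin n) K,
        Z * ((Jᵀ)⁻¹ * J) = ((Jᵀ)⁻¹ * J) * Z →
        ∃ X Y : Matrix (Fin n) (Fin n) K,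
          Xᵀ * J + J * X = 0 ∧ Yᵀ * J - J * Y = 0 ∧ Z = X + Y) ∧
    (∀ X : Matrix (Fin n) (Fin n) K,
        (Xᵀ * J + J * X = 0 ∨ Xᵀ * J - J * X = 0) →
        X * ((Jᵀ)⁻¹ * J) = ((Jᵀ)⁻¹ * J) * X) := by
  have hd : IsUnit J.det := (Matrix.isUnit_iff_isUnit_det J).mp hJ
  have hdT : IsUnit Jᵀ.det := by rwa [Matrix.det_transpose]
  have hJi : J⁻¹ * J = 1 := Matrix.nonsing_inv_mul J hd
  have hJi' : J * J⁻¹ = 1 := Matrix.mul_nonsing_inv J hd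
  have hTi : (Jᵀ)⁻¹ * Jᵀ = 1 := Matrix.nonsing_inv_mul _ hdT
  have hTi' : Jᵀ * (Jᵀ)⁻¹ = 1 := Matrix.mul_nonsing_inv _ hdT
  refine ⟨?_, ?_, ?_⟩
  · intro X h1 hsub
    have h3 : (Xᵀ * J + J * X) - (Xᵀ * J - J * X) = 0 := by rw [h1, hsub, sub_zero]
    have h4 : J * X + J * X = 0 := by rw [← h3]; abel
    have h5 : (2 : K) • (J * X) = 0 := by rw [two_smul]; exact h4
    have h6 : J * X = 0 := by
      rcases smul_eq_zero.mp h5 with h | h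
      · exact absurd h h2
      · exact h
    calc X = J⁻¹ * (J * X) := by rw [← mul_assoc, hJi, one_mul]
      _ = 0 := by rw [h6, mul_zero]
  · intro Z hZ
    set W : Matrix (Fin n) (Fin n) K := J⁻¹ * (Zᵀ * J) with hW
    have hJW : J * W = Zᵀ * J := by rw [hW, ← mul_assoc, hJi', one_mul]
    have hWT : Wᵀ * J = J * Z := by
      have h1 : Wᵀ = Jᵀ * Z * (Jᵀ)⁻¹ := by
        rw [hW, Matrix.transpose_mul, Matrix.transpose_mul, Matrix.transpose_nonsing_inv,
          Matrix.transpose_transpose, mul_assoc]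
      calc Wᵀ * J = Jᵀ * (Z * ((Jᵀ)⁻¹ * J)) := by
            rw [h1]; rw [mul_assoc, mul_assoc]
        _ = Jᵀ * (((Jᵀ)⁻¹ * J) * Z) := by rw [hZ]
        _ = J * Z := by rw [← mul_assoc, ← mul_assoc, hTi', one_mul]
    refine ⟨(2 : K)⁻¹ • (Z - W), (2 : K)⁻¹ • (Z + W), ?_, ?_, ?_⟩
    · have : (Z - W)ᵀ * J + J * (Z - W) = 0 := by
        rw [Matrix.transpose_sub, Matrix.sub_mul, Matrix.mul_sub, hWT, hJW]
        abel
      rw [Matrix.transpose_smul, Matrix.smul_mul, Matrix.mul_smul, ← smul_add, this, smul_zero]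
    · have : (Z + W)ᵀ * J - J * (Z + W) = 0 := by
        rw [Matrix.transpose_add, Matrix.add_mul, Matrix.mul_add, hWT, hJW]
        abel
      rw [Matrix.transpose_smul, Matrix.smul_mul, Matrix.mul_smul, ← smul_sub, this, smul_zero]
    · rw [← smul_add]
      have h1 : (Z - W) + (Z + W) = (2 : K) • Z := by rw [two_smul]; abel
      rw [h1, smul_smul, inv_mul_cancel₀ h2, one_smul]
  · intro X h
    have key : ∀ A B : Matrix (Fin n) (Fin n) K,
        Jᵀ * A = Jᵀ * B → A = B := by
      intro A B hAB
      have := congrArg (fun M => (Jᵀ)⁻¹ * M) hAB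
      simpa [← mul_assoc, hTi, one_mul] using this
    rcases h with h1 | h1
    · have hXJ : Xᵀ * J = -(J * X) := eq_neg_of_add_eq_zero_left h1
      have ht : Jᵀ * X = -(Xᵀ * Jᵀ) := by
        have h' := congrArg Matrix.transpose h1
        simp only [Matrix.transpose_add, Matrix.transpose_mul, Matrix.transpose_transpose,
          Matrix.transpose_zero] at h'
        exact add_eq_zero_iff_eq_neg.mp h'
      apply key
      calc Jᵀ * (X * ((Jᵀ)⁻¹ * J))
          = (Jᵀ * X) * ((Jᵀ)⁻¹ * J) := by rw [mul_assoc]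
        _ = -(Xᵀ * Jᵀ) * ((Jᵀ)⁻¹ * J) := by rw [ht]
        _ = -(Xᵀ * (Jᵀ * ((Jᵀ)⁻¹ * J))) := by rw [Matrix.neg_mul, mul_assoc]
        _ = -(Xᵀ * J) := by rw [neg_inj, ← mul_assoc Jᵀ, hTi', one_mul]
        _ = J * X := by rw [hXJ, neg_neg]
        _ = Jᵀ * (((Jᵀ)⁻¹ * J) * X) := by rw [← mul_assoc, ← mul_assoc, hTi', one_mul]
    · have hXJ : Xᵀ * J = J * X := sub_eq_zero.mp h1
      have ht : Jᵀ * X = Xᵀ * Jᵀ := by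
        have h' := congrArg Matrix.transpose hXJ
        simp only [Matrix.transpose_mul, Matrix.transpose_transpose] at h'
        exact h'
      apply key
      calc Jᵀ * (X * ((Jᵀ)⁻¹ * J))
          = (Jᵀ * X) * ((Jᵀ)⁻¹ * J) := by rw [mul_assoc]
        _ = Xᵀ * Jᵀ * ((Jᵀ)⁻¹ * J) := by rw [ht]
        _ = Xᵀ * (Jᵀ * ((Jᵀ)⁻¹ * J)) := by rw [mul_assoc]
        _ = Xᵀ * J := by rw [← mul_assoc Jᵀ, hTi', one_mul]
        _ = J * X := hXJ
        _ = Jᵀ * (((Jᵀ)⁻¹ * J) * X) := by rw [← mul_assoc, ← mul_assoc, hTi', one_mul]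
end

section
/- Let J be an n×n matrix over a field of characteristic ≠ 2, and let Z_J = {(Z₁, Z₂) : Z₁J = JZ₂ and Z₁Jᵀ = JᵀZ₂}. The map (Z₁, Z₂) ↦ (Z₁ᵀ − Z₂, Z₁ᵀ + Z₂) is a linear bijection from Z_J onto sol(J) × cosol(J), with inverse (X, Y) ↦ ((Xᵀ + Yᵀ)/2, (Y − X)/2). -/
open Matrix

/-- The map `(Z₁, Z₂) ↦ (Z₁ᵀ − Z₂, Z₁ᵀ + Z₂)` is a linear bijection from
`Z_J = {(Z₁, Z₂) : Z₁J = JZ₂ and Z₁Jᵀ = JᵀZ₂}` onto `sol(J) × cosol(J)`, with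
inverse `(X, Y) ↦ ((Xᵀ + Yᵀ)/2, (Y − X)/2)`. -/
theorem ZJ_bijects_sol_times_cosol {K : Type*} [Field K] (h2 : (2 : K) ≠ 0)
    (n : ℕ) (J : Matrix (Fin n) (Fin n) K) :
    (∀ Z₁ Z₂ : Matrix (Fin n) (Fin n) K,
      Z₁ * J = J * Z₂ → Z₁ * Jᵀ = Jᵀ * Z₂ →
        ((Z₁ᵀ - Z₂)ᵀ * J + J * (Z₁ᵀ - Z₂) = 0 ∧
         (Z₁ᵀ + Z₂)ᵀ * J - J * (Z₁ᵀ + Z₂) = 0) ∧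
        ((2 : K)⁻¹ • ((Z₁ᵀ - Z₂)ᵀ + (Z₁ᵀ + Z₂)ᵀ) = Z₁ ∧
         (2 : K)⁻¹ • ((Z₁ᵀ + Z₂) - (Z₁ᵀ - Z₂)) = Z₂)) ∧
    (∀ X Y : Matrix (Fin n) (Fin n) K,
      Xᵀ * J + J * X = 0 → Yᵀ * J - J * Y = 0 →
        (((2 : K)⁻¹ • (Xᵀ + Yᵀ)) * J = J * ((2 : K)⁻¹ • (Y - X)) ∧
         ((2 : K)⁻¹ • (Xᵀ + Yᵀ)) * Jᵀ = Jᵀ * ((2 : K)⁻¹ • (Y - X))) ∧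
        (((2 : K)⁻¹ • (Xᵀ + Yᵀ))ᵀ - (2 : K)⁻¹ • (Y - X) = X ∧
         ((2 : K)⁻¹ • (Xᵀ + Yᵀ))ᵀ + (2 : K)⁻¹ • (Y - X) = Y)) := by
  constructor
  · intro Z₁ Z₂ hJ hJt
    have h3 : J * Z₁ᵀ = Z₂ᵀ * J := by
      have := congrArg Matrix.transpose hJt
      simpa [Matrix.transpose_mul] using this
    refine ⟨⟨?_, ?_⟩, ?_, ?_⟩
    · rw [Matrix.transpose_sub, Matrix.transpose_transpose, Matrix.sub_mul,
        Matrix.mul_sub, hJ, h3]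
      abel
    · rw [Matrix.transpose_add, Matrix.transpose_transpose, Matrix.add_mul,
        Matrix.mul_add, hJ, h3]
      abel
    · ext i j
      simp only [Matrix.smul_apply, Matrix.add_apply, Matrix.sub_apply,
        Matrix.transpose_apply, smul_eq_mul]
      field_simp
      ring
    · ext i j
      simp only [Matrix.smul_apply, Matrix.add_apply, Matrix.sub_apply,
        Matrix.transpose_apply, smul_eq_mul]
      field_simp
      ring
  · intro X Y hX hY
    have hX1 : Xᵀ * J = -(J * X) := eq_neg_of_add_eq_zero_left hX
    have hY1 : Yᵀ * J = J * Y := sub_eq_zero.mp hY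
    have hX2 : Xᵀ * Jᵀ = -(Jᵀ * X) := by
      have := congrArg Matrix.transpose hX
      simp only [Matrix.transpose_add, Matrix.transpose_mul,
        Matrix.transpose_transpose, Matrix.transpose_zero] at this
      exact eq_neg_of_add_eq_zero_right this
    have hY2 : Yᵀ * Jᵀ = Jᵀ * Y := by
      have := congrArg Matrix.transpose hY
      simp only [Matrix.transpose_sub, Matrix.transpose_mul,
        Matrix.transpose_transpose, Matrix.transpose_zero] at this
      exact (sub_eq_zero.mp this).symm
    refine ⟨⟨?_, ?_⟩, ?_, ?_⟩
    · rw [Matrix.smul_mul, Matrix.mul_smul]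
      congr 1
      rw [Matrix.add_mul, Matrix.mul_sub, hX1, hY1]
      abel
    · rw [Matrix.smul_mul, Matrix.mul_smul]
      congr 1
      rw [Matrix.add_mul, Matrix.mul_sub, hX2, hY2]
      abel
    · ext i j
      simp only [Matrix.smul_apply, Matrix.add_apply, Matrix.sub_apply,
        Matrix.transpose_apply, smul_eq_mul]
      field_simp
      ring
    · ext i j
      simp only [Matrix.smul_apply, Matrix.add_apply, Matrix.sub_apply,
        Matrix.transpose_apply, smul_eq_mul]
      field_simp
      ring
end

section
/- For an invertible n×n matrix J over a field, the set {(Z₁, Z₂) : Z₁J = JZ₂ and Z₁Jᵀ = JᵀZ₂} equals {(Zᵀ, J⁻¹ZᵀJ) : Z commutes with J^{-T}J}. -/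
open Matrix

/-- For invertible `J`, the set `{(Z₁, Z₂) : Z₁J = JZ₂ and Z₁Jᵀ = JᵀZ₂}` equals
`{(Zᵀ, J⁻¹ZᵀJ) : Z commutes with J⁻ᵀJ}`. -/
theorem ZJ_eq_centralizer_image {K : Type*} [Field K] (n : ℕ)
    (J : Matrix (Fin n) (Fin n) K) (hJ : IsUnit J) :
    ∀ Z₁ Z₂ : Matrix (Fin n) (Fin n) K,
      (Z₁ * J = J * Z₂ ∧ Z₁ * Jᵀ = Jᵀ * Z₂) ↔
      (∃ Z : Matrix (Fin n) (Fin n) K,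
        Z * ((Jᵀ)⁻¹ * J) = ((Jᵀ)⁻¹ * J) * Z ∧ Z₁ = Zᵀ ∧ Z₂ = J⁻¹ * Zᵀ * J) := by
  obtain ⟨iJ⟩ := hJ.nonempty_invertible
  have hTinv : (Jᵀ)⁻¹ = (J⁻¹)ᵀ := (Matrix.transpose_nonsing_inv J).symm
  intro Z₁ Z₂
  constructor
  · rintro ⟨h1, h2⟩
    have hZ₂ : Z₂ = J⁻¹ * Z₁ * J := by
      rw [Matrix.mul_assoc, h1, Matrix.inv_mul_cancel_left_of_invertible]
    have hZ₂' : Z₂ = (Jᵀ)⁻¹ * Z₁ * Jᵀ := by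
      rw [Matrix.mul_assoc, h2, Matrix.inv_mul_cancel_left_of_invertible]
    have key : J⁻¹ * Z₁ * J = (Jᵀ)⁻¹ * Z₁ * Jᵀ := hZ₂ ▸ hZ₂'
    have E : Jᵀ * (J⁻¹ * Z₁) = Z₁ * (Jᵀ * J⁻¹) := by
      have := congrArg (fun M => Jᵀ * M * J⁻¹) key
      simp only [Matrix.mul_assoc] at this
      rw [Matrix.mul_inv_cancel_left_of_invertible, Matrix.mul_inv_of_invertible,
        Matrix.mul_one] at this
      simpa [Matrix.mul_assoc] using this
    refine ⟨Z₁ᵀ, ?_, (transpose_transpose _).symm, by rw [transpose_transpose]; exact hZ₂⟩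
    have := congrArg Matrix.transpose E
    simpa [Matrix.transpose_mul, hTinv, Matrix.mul_assoc] using this
  · rintro ⟨Z, hc, rfl, rfl⟩
    constructor
    · rw [Matrix.mul_assoc, Matrix.mul_inv_cancel_left_of_invertible]
    · have hc' : Jᵀ * J⁻¹ * Zᵀ = Zᵀ * (Jᵀ * J⁻¹) := by
        have := congrArg Matrix.transpose hc
        simpa [Matrix.transpose_mul, hTinv, Matrix.mul_assoc] using this
      calc Zᵀ * Jᵀ = Zᵀ * (Jᵀ * J⁻¹) * J := by
            simp [Matrix.mul_assoc]
        _ = Jᵀ * J⁻¹ * Zᵀ * J := by rw [hc']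
        _ = Jᵀ * (J⁻¹ * Zᵀ * J) := by simp [Matrix.mul_assoc]
end

section
/- Let J be an invertible n×n complex matrix with cosquare C = J^{-T}J. If W is an n×r matrix satisfying CW = W J_r^λ (a Jordan chain matrix for eigenvalue λ of C, with J_r^λ the r×r Jordan block), then JW and JᵀW both satisfy C^{-T}(JW) = (JW)J_r^λ and C^{-T}(JᵀW) = (JᵀW)J_r^λ, i.e., they are Jordan chain matrices of C^{-T} for the same eigenvalue λ. -/
open Matrix

/-- The `r×r` upper triangular Jordan block with eigenvalue `lam`. -/
def jordanBlock (r : ℕ) (lam : ℂ) : Matrix (Fin r) (Fin r) ℂ :=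
  Matrix.of fun i j => if i = j then lam else if (i : ℕ) + 1 = (j : ℕ) then 1 else 0

/-- If `W` is a Jordan chain matrix of the cosquare `C = J⁻ᵀJ` for eigenvalue `lam`,
i.e. `C W = W J_r^lam`, then `J W` and `Jᵀ W` are Jordan chain matrices of `C⁻ᵀ`
for the same eigenvalue. -/
theorem jordan_chain_transfer (n r : ℕ) (J : Matrix (Fin n) (Fin n) ℂ)
    (hJ : IsUnit J) (lam : ℂ) (W : Matrix (Fin n) (Fin r) ℂ)
    (hW : ((Jᵀ)⁻¹ * J) * W = W * jordanBlock r lam) :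
    ((((Jᵀ)⁻¹ * J)⁻¹)ᵀ * (J * W) = (J * W) * jordanBlock r lam) ∧
    ((((Jᵀ)⁻¹ * J)⁻¹)ᵀ * (Jᵀ * W) = (Jᵀ * W) * jordanBlock r lam) := by
  have hJT : IsUnit Jᵀ.det := by
    rw [Matrix.det_transpose]; exact hJ.map (Matrix.detMonoidHom)
  haveI : Invertible Jᵀ := Matrix.invertibleOfIsUnitDet _ hJT
  have h1 : (((Jᵀ)⁻¹ * J)⁻¹)ᵀ = J * (Jᵀ)⁻¹ := by
    rw [Matrix.mul_inv_rev, Matrix.inv_inv_of_invertible, Matrix.transpose_mul,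
      Matrix.transpose_nonsing_inv, Matrix.transpose_transpose]
  have hJW : J * W = Jᵀ * (W * jordanBlock r lam) := by
    calc J * W = Jᵀ * ((Jᵀ)⁻¹ * J * W) := by
          rw [← Matrix.mul_assoc, ← Matrix.mul_assoc, Matrix.mul_nonsing_inv _ hJT,
            Matrix.one_mul]
      _ = Jᵀ * (W * jordanBlock r lam) := by rw [hW]
  constructor
  · calc (((Jᵀ)⁻¹ * J)⁻¹)ᵀ * (J * W) = J * ((Jᵀ)⁻¹ * J * W) := by
          rw [h1, Matrix.mul_assoc, Matrix.mul_assoc]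
      _ = J * W * jordanBlock r lam := by rw [hW, Matrix.mul_assoc]
  · calc (((Jᵀ)⁻¹ * J)⁻¹)ᵀ * (Jᵀ * W) = J * ((Jᵀ)⁻¹ * Jᵀ) * W := by
          rw [h1, Matrix.mul_assoc, Matrix.mul_assoc, Matrix.mul_assoc]
      _ = J * W := by rw [Matrix.nonsing_inv_mul _ hJT, Matrix.mul_one]
      _ = Jᵀ * W * jordanBlock r lam := by rw [hJW, Matrix.mul_assoc]
end
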